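/- arXiv:2301.08383 — 3 statements merged into one kernel-verified Lean document; each statement's English description precedes it below -/
import Mathlib

section
/- Let S be an Artinian local ring which is injective as a module over itself. Then for every ideal J of S one has Ann_S(Ann_S(J)) = J. -/
/-!
If `x ∈ Ann(Ann J)`, the ideal `I = (J : x)` has zero annihilator: self-injectivity extends
`S ⧸ I ≅ S ∙ x̄ ⊆ S ⧸ J` so that every `a ∈ Ann I` becomes `x b` with `b ∈ Ann J`, and `x b = 0`.
In an Artinian local ring a proper ideal lies in the nilpotent maximal ideal and so has a nonzero
annihilator; hence `I = S`, i.e. `x ∈ J`.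
-/

theorem Module.Injective.exists_linearMap_apply_eq {R M : Type*} [Ring R] [AddCommGroup M]
    [Module R M] [Module.Injective R R] (m : M) (a : R) (h : ∀ r : R, r • m = 0 → r * a = 0) :
    ∃ g : M →ₗ[R] R, g m = a := by
  let K := LinearMap.ker (LinearMap.toSpanSingleton R M m)
  let i : (R ⧸ K) →ₗ[R] M := K.liftQ (LinearMap.toSpanSingleton R M m) le_rfl
  have hi : Function.Injective i :=
    LinearMap.ker_eq_bot.mp (K.ker_liftQ_eq_bot _ _ le_rfl)
  let f : (R ⧸ K) →ₗ[R] R := K.liftQ (LinearMap.toSpanSingleton R R a) fun r hr => h r hr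
  obtain ⟨g, hg⟩ := Module.Injective.extension_property R R _ _ i hi f
  have hm : i (Submodule.Quotient.mk 1) = m := one_smul R m
  exact ⟨g, hm ▸ (LinearMap.congr_fun hg (Submodule.Quotient.mk 1)).trans (one_smul R a)⟩

theorem Ideal.exists_mem_annihilator_mul_eq {R : Type*} [CommRing R] [Module.Injective R R]
    {J : Ideal R} {x a : R} (ha : ∀ r : R, r * x ∈ J → r * a = 0) :
    ∃ b ∈ J.annihilator, x * b = a := by
  obtain ⟨g, hg⟩ := Module.Injective.exists_linearMap_apply_eq
    (Submodule.Quotient.mk x : R ⧸ J) a fun r hr => ha r <| by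
      rwa [← Submodule.Quotient.mk_smul, Submodule.Quotient.mk_eq_zero] at hr
  have hmk (r : R) : (Submodule.Quotient.mk r : R ⧸ J) = r • Submodule.Quotient.mk 1 := by
    rw [← Submodule.Quotient.mk_smul, smul_eq_mul, mul_one]
  refine ⟨g (Submodule.Quotient.mk 1), Submodule.mem_annihilator.mpr fun j hj => ?_, ?_⟩
  · rw [smul_eq_mul, mul_comm, ← smul_eq_mul, ← map_smul, ← hmk,
      (Submodule.Quotient.mk_eq_zero J).mpr hj, map_zero]
  · rw [← smul_eq_mul, ← map_smul, ← hmk, hg]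

theorem Ideal.annihilator_ne_bot_of_le_of_isNilpotent {R : Type*} [CommRing R] [Nontrivial R]
    {I N : Ideal R} (hN : IsNilpotent N) (hI : I ≤ N) : I.annihilator ≠ ⊥ := by
  have hk : 0 < nilpotencyClass N := pos_nilpotencyClass_iff.mpr hN
  refine ne_bot_of_le_ne_bot (pow_pred_nilpotencyClass hN) ?_
  refine (Submodule.le_annihilator_iff.mpr ?_).trans (Submodule.annihilator_mono hI)
  rw [smul_eq_mul, ← pow_succ, Nat.sub_add_cancel hk, pow_nilpotencyClass hN,
    Ideal.zero_eq_bot]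

theorem IsLocalRing.annihilator_ne_bot_of_ne_top {R : Type*} [CommRing R] [IsArtinianRing R]
    [IsLocalRing R] {I : Ideal R} (hI : I ≠ ⊤) : I.annihilator ≠ ⊥ := by
  have hm : IsNilpotent (IsLocalRing.maximalIdeal R) := by
    simpa [IsLocalRing.jacobson_eq_maximalIdeal ⊥ bot_ne_top] using
      IsArtinianRing.isNilpotent_jacobson_bot (R := R)
  exact Ideal.annihilator_ne_bot_of_le_of_isNilpotent hm (IsLocalRing.le_maximalIdeal hI)

/-- Let `S` be an Artinian local ring which is injective as a module over itself.
Then for every ideal `J` of `S` one has `Ann_S(Ann_S(J)) = J`. -/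
theorem stmt9 (S : Type*) [CommRing S] [IsArtinianRing S] [IsLocalRing S]
    [Module.Injective S S] (J : Ideal S) :
    (Submodule.annihilator J).annihilator = J := by
  refine le_antisymm (fun x hx => ?_)
    (Submodule.le_annihilator_iff.mpr (Submodule.mul_annihilator J))
  have hcolon : (J.colon {x}).annihilator = ⊥ := by
    refine eq_bot_iff.mpr fun a ha => ?_
    obtain ⟨b, hb, rfl⟩ := Ideal.exists_mem_annihilator_mul_eq (J := J) (x := x) fun r hr => by
      rw [mul_comm, ← smul_eq_mul]
      exact Submodule.mem_annihilator.mp ha r (Submodule.mem_colon_singleton.mpr hr)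
    exact Submodule.mem_annihilator.mp hx b hb
  have htop : J.colon {x} = ⊤ := by
    by_contra hne
    exact IsLocalRing.annihilator_ne_bot_of_ne_top hne hcolon
  have hone : (1 : S) ∈ J.colon {x} := htop ▸ Submodule.mem_top
  simpa using Submodule.mem_colon_singleton.mp hone
end

section
/- Let Q be a field, let a, r ≥ 0, and let φ = (φ₁,…,φ_a) : Q^{a+r} → Q^a be a linear map with components φ_i : Q^{a+r} → Q. Then the iterated contraction map φ̃_a ∘ ⋯ ∘ φ̃₁ : ∧^{a+r} Q^{a+r} → ∧^r Q^{a+r} is nonzero (equivalently, injective) if and only if φ is surjective. -/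
/-- The exterior product `f 0 ∧ ⋯ ∧ f (n-1)`, as an element of the `n`-th exterior
power `⋀[R]^n M`. -/
noncomputable def wedge (R : Type*) [CommRing R] {M : Type*} [AddCommGroup M]
    [Module R M] (n : ℕ) (f : Fin n → M) : ⋀[R]^n M :=
  ⟨ExteriorAlgebra.ιMulti R n f, ExteriorAlgebra.ιMulti_range R n (Set.mem_range_self f)⟩

/-- Iterated contraction: given a family `D` of contraction operators
`D ψ k : ⋀^{k+1} F → ⋀^k F` (contraction with the functional `ψ`), and functionals
`ψ₁, …, ψ_s`, this is the composite `ψ̃_s ∘ ⋯ ∘ ψ̃_1 : ⋀^{n+s} F → ⋀^n F`. -/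
noncomputable def iterContr {R : Type*} [CommRing R] {F : Type*} [AddCommGroup F]
    [Module R F]
    (D : Module.Dual R F → (k : ℕ) → (↥(⋀[R]^(k+1) F) →ₗ[R] ↥(⋀[R]^k F))) :
    (s : ℕ) → (Fin s → Module.Dual R F) → (n : ℕ) →
      (↥(⋀[R]^(n+s) F) →ₗ[R] ↥(⋀[R]^n F))
  | 0, _, _ => LinearMap.id
  | s + 1, ψ, n => (iterContr D s (fun i => ψ i.succ) n).comp (D (ψ 0) (n + s))

section Aux

open ExteriorAlgebra

variable {R : Type*} [CommRing R] {M : Type*} [AddCommGroup M] [Module R M]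

noncomputable abbrev cL (d : Module.Dual R M) :
    ExteriorAlgebra R M →ₗ[R] ExteriorAlgebra R M :=
  CliffordAlgebra.contractLeft (Q := 0) d

lemma cL_ιMulti (d : Module.Dual R M) : ∀ (n : ℕ) (m : Fin (n+1) → M),
    cL d (ιMulti R (n+1) m) =
      ∑ i : Fin (n+1), ((-1 : R) ^ (i : ℕ) * d (m i)) • ιMulti R n (m ∘ i.succAbove)
  | 0, m => by
    rw [ιMulti_succ_apply]
    simp only [ιMulti_zero_apply, mul_one, CliffordAlgebra.contractLeft_ι]
    rw [Fin.sum_univ_one]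
    simp [Algebra.algebraMap_eq_smul_one]
  | n + 1, m => by
    rw [ιMulti_succ_apply, CliffordAlgebra.contractLeft_ι_mul, cL_ιMulti d n]
    have h0 : Matrix.vecTail m = m ∘ Fin.succAbove 0 := by
      funext j; simp [Matrix.vecTail, Fin.succAbove_zero]
    have h1 : ∀ j : Fin (n+1),
        ι R (m 0) * ιMulti R n (Matrix.vecTail m ∘ j.succAbove)
          = ιMulti R (n+1) (m ∘ (Fin.succ j).succAbove) := by
      intro j
      have ha : m ∘ (Fin.succ j).succAbove = Fin.cons (m 0) (Matrix.vecTail m ∘ j.succAbove) := by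
        funext k
        refine Fin.cases ?_ (fun l => ?_) k
        · simp [Fin.succ_succAbove_zero]
        · simp only [Function.comp_apply, Fin.cons_succ, Matrix.vecTail,
            Fin.succ_succAbove_succ]
      rw [ha, ιMulti_succ_apply, Fin.cons_zero]
      simp only [Matrix.vecTail, Fin.tail_cons]
      congr 1

    conv_rhs => rw [Fin.sum_univ_succ]
    rw [Finset.mul_sum]
    simp only [mul_smul_comm, h1]
    rw [sub_eq_add_neg, ← Finset.sum_neg_distrib]
    congr 1
    · rw [h0]; simp
    · apply Finset.sum_congr rfl
      intro j _
      rw [← neg_smul]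
      congr 1
      simp only [Matrix.vecTail, Function.comp, Fin.val_succ, pow_succ]
      ring

set_option synthInstance.maxHeartbeats 1000000
set_option maxHeartbeats 1600000

noncomputable def iterCL : (s : ℕ) → (Fin s → Module.Dual R M) →
    (ExteriorAlgebra R M →ₗ[R] ExteriorAlgebra R M)
  | 0, _ => LinearMap.id
  | s + 1, ψ => (iterCL s (fun i => ψ i.succ)).comp (cL (ψ 0))

variable (R M) in
noncomputable def hAlg : ExteriorAlgebra R (Module.Dual R M) →ₐ[R]
    Module.End R (ExteriorAlgebra R M) :=
  ExteriorAlgebra.lift R ⟨CliffordAlgebra.contractLeft (Q := 0),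
    fun d => LinearMap.ext fun x => CliffordAlgebra.contractLeft_contractLeft d x⟩

lemma hAlg_ι (d : Module.Dual R M) : hAlg R M (ι R d) = cL d := by
  rw [hAlg, ExteriorAlgebra.lift_ι_apply]

lemma iterCL_eq : ∀ (s : ℕ) (ψ : Fin s → Module.Dual R M),
    iterCL s ψ = hAlg R M (ιMulti R s (fun i => ψ i.rev))
  | 0, ψ => by
    rw [iterCL, ιMulti_zero_apply, map_one]
    rfl
  | s + 1, ψ => by
    have key : ιMulti R (s+1) (fun i => ψ i.rev)
        = ιMulti R s (fun i => ψ i.rev.succ) * ι R (ψ 0) := by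
      rw [ιMulti_apply, ιMulti_apply, List.ofFn_succ', List.concat_eq_append,
        List.prod_append, List.prod_singleton]
      simp only [Function.comp_apply, Fin.rev_castSucc, Fin.rev_last]
    rw [iterCL, iterCL_eq s, key, map_mul, hAlg_ι]
    rfl

lemma iterCL_zero_of_dep {K : Type*} [Field K] {V : Type*} [AddCommGroup V] [Module K V]
    (s : ℕ) (ψ : Fin s → Module.Dual K V) (h : ¬ LinearIndependent K ψ) :
    iterCL s ψ = 0 := by
  rw [iterCL_eq]
  have h2 : ¬ LinearIndependent K (fun i : Fin s => ψ i.rev) := by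
    intro hli
    exact h ((linearIndependent_equiv (Fin.revPerm (n := s))).mp hli)
  have h3 : ιMulti K s (fun i : Fin s => ψ i.rev) = 0 :=
    AlternatingMap.map_linearDependent (ιMulti K s) _ h2
  rw [h3, map_zero]

lemma iterCL_adapted : ∀ (s : ℕ) (ψ : Fin s → Module.Dual R M) (n : ℕ) (m : Fin (n + s) → M),
    (∀ (i : Fin s) (j : Fin (n + s)), ψ i (m j) = if (i : ℕ) = (j : ℕ) then 1 else 0) →
    iterCL s ψ (ιMulti R (n + s) m) = ιMulti R n (fun j => m ⟨s + j.1, by omega⟩)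
  | 0, ψ, n, m, h => by
    rw [iterCL]
    simp only [LinearMap.id_coe, id_eq]
    congr 1
    funext j
    congr 1
    exact Fin.ext (by simp)
  | s + 1, ψ, n, m, h => by
    rw [iterCL]
    simp only [LinearMap.comp_apply]
    show (iterCL s fun i => ψ i.succ) (cL (ψ 0) (ιMulti R ((n + s) + 1) m))
      = ιMulti R n fun j => m ⟨s + 1 + j.1, by omega⟩
    haveI : NeZero ((n + s) + 1) := ⟨by omega⟩
    haveI : NeZero (n + (s + 1)) := ⟨by omega⟩
    have h1 : cL (ψ 0) (ιMulti R (n + s + 1) m)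
        = ιMulti R (n + s) (m ∘ Fin.succ) := by
      rw [cL_ιMulti]
      rw [Finset.sum_eq_single (0 : Fin (n + s + 1))]
      · have := h 0 0
        simp only [Fin.val_zero, if_pos rfl] at this
        rw [this]
        simp [Fin.succAbove_zero]
      · intro j _ hj
        have := h 0 j
        rw [if_neg (by simpa [Fin.ext_iff] using fun hh => hj (Fin.ext hh.symm))] at this
        rw [this, mul_zero, zero_smul]
      · intro hmem
        exact absurd (Finset.mem_univ _) hmem
    rw [h1, iterCL_adapted s (fun i => ψ i.succ) n (m ∘ Fin.succ)
      (fun i j => by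
        have := h i.succ j.succ
        simpa [Fin.val_succ] using this)]
    congr 1
    funext j
    simp only [Function.comp_apply]
    congr 1
    exact Fin.ext (by simp; omega)

lemma wedge_span (n : ℕ) :
    Submodule.span R (Set.range (wedge R (M := M) n)) = ⊤ := by
  apply Submodule.map_injective_of_injective (Submodule.injective_subtype (⋀[R]^n M))
  rw [Submodule.map_span, Submodule.map_subtype_top, ← Set.range_comp]
  have : (⋀[R]^n M).subtype ∘ wedge R n = ιMulti R n := rfl
  rw [this, ιMulti_span_fixedDegree]

lemma D_val
    (D : Module.Dual R M → (k : ℕ) → (↥(⋀[R]^(k+1) M) →ₗ[R] ↥(⋀[R]^k M)))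
    (hD : ∀ (ψ : Module.Dual R M) (k : ℕ) (m : Fin (k+1) → M),
      D ψ k (wedge R (k+1) m) = ∑ i : Fin (k+1),
        ((-1 : R) ^ (i : ℕ) * ψ (m i)) • wedge R k (m ∘ i.succAbove))
    (ψ : Module.Dual R M) (k : ℕ) (x : ↥(⋀[R]^(k+1) M)) :
    (D ψ k x : ExteriorAlgebra R M) = cL ψ (x : ExteriorAlgebra R M) := by
  have heq : (⋀[R]^k M).subtype ∘ₗ D ψ k = (cL ψ) ∘ₗ (⋀[R]^(k+1) M).subtype := by
    apply LinearMap.ext_on (wedge_span (R := R) (M := M) (k+1))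
    rintro _ ⟨m, rfl⟩
    simp only [LinearMap.comp_apply, Submodule.coe_subtype, hD]
    rw [show ((wedge R (k+1) m : ⋀[R]^(k+1) M) : ExteriorAlgebra R M)
      = ιMulti R (k+1) m from rfl, cL_ιMulti]
    rw [AddSubmonoidClass.coe_finset_sum]
    apply Finset.sum_congr rfl
    intro i _
    rw [SetLike.val_smul]
    rfl
  exact congrArg (fun f => f x) (congrArg DFunLike.coe heq)

lemma iter_val
    (D : Module.Dual R M → (k : ℕ) → (↥(⋀[R]^(k+1) M) →ₗ[R] ↥(⋀[R]^k M)))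
    (hD : ∀ (ψ : Module.Dual R M) (k : ℕ) (m : Fin (k+1) → M),
      D ψ k (wedge R (k+1) m) = ∑ i : Fin (k+1),
        ((-1 : R) ^ (i : ℕ) * ψ (m i)) • wedge R k (m ∘ i.succAbove)) :
    ∀ (s : ℕ) (ψ : Fin s → Module.Dual R M) (n : ℕ) (x : ↥(⋀[R]^(n+s) M)),
      (iterContr D s ψ n x : ExteriorAlgebra R M) = iterCL s ψ (x : ExteriorAlgebra R M)
  | 0, ψ, n, x => rfl
  | s + 1, ψ, n, x => by
    rw [iterContr, iterCL]
    simp only [LinearMap.comp_apply]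
    exact (iter_val D hD s (fun i => ψ i.succ) n (D (ψ 0) (n + s) x)).trans
      (congrArg _ (D_val D hD (ψ 0) (n + s) x))

lemma ιMulti_ne_zero_of_pairing {K : Type*} [Field K] {V : Type*} [AddCommGroup V]
    [Module K V] (n : ℕ) (v : Fin n → V) (θ : V [⋀^Fin n]→ₗ[K] K) (hθ : θ v ≠ 0) :
    ιMulti K n v ≠ 0 := by
  intro h0
  have := liftAlternating_apply_ιMulti
    (Function.update (fun i => (0 : V [⋀^Fin i]→ₗ[K] K)) n θ) v
  rw [h0, map_zero, Function.update_self] at this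
  exact hθ this.symm

lemma ιMulti_eq_det_smul {K : Type*} [Field K] {V : Type*} [AddCommGroup V]
    [Module K V] {n : ℕ} (b : Module.Basis (Fin n) K V) (f : Fin n → V) :
    ιMulti K n f = b.det f • ιMulti K n ⇑b := by
  have : (ιMulti K n : V [⋀^Fin n]→ₗ[K] ExteriorAlgebra K V)
      = (LinearMap.toSpanSingleton K _ (ιMulti K n ⇑b)).compAlternatingMap b.det := by
    apply Module.Basis.ext_alternating b
    intro v hv
    have hbij : Function.Bijective v := (Finite.injective_iff_bijective).mp hv
    set σ : Equiv.Perm (Fin n) := Equiv.ofBijective v hbij with hσ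
    have hvσ : ∀ g : Fin n → V, (fun i => g (v i)) = g ∘ σ := fun g => rfl
    rw [show (fun i => b (v i)) = ⇑b ∘ σ from rfl]
    rw [AlternatingMap.map_perm]
    simp only [LinearMap.compAlternatingMap_apply, AlternatingMap.map_perm,
      Module.Basis.det_self, LinearMap.toSpanSingleton_apply]
    rcases Int.units_eq_one_or (Equiv.Perm.sign σ) with hs | hs <;> rw [hs] <;> simp
  have := congrArg (fun g => g f) (congrArg (DFunLike.coe) this)
  simpa using this

open ExteriorAlgebra

end Aux

open ExteriorAlgebra

set_option maxHeartbeats 1600000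
set_option synthInstance.maxHeartbeats 1000000

/-- Let `Q` be a field, let `a, r ≥ 0`, and let `φ = (φ₁,…,φ_a) : Q^{a+r} → Q^a` be a
linear map with components `φᵢ : Q^{a+r} → Q`.  Then the iterated contraction map
`φ̃_a ∘ ⋯ ∘ φ̃₁ : ⋀^{a+r} Q^{a+r} → ⋀^r Q^{a+r}` is nonzero (equivalently, injective)
if and only if `φ` is surjective. -/
theorem stmt10 (Q : Type*) [Field Q] (a r : ℕ)
    (φ : (Fin (a + r) → Q) →ₗ[Q] (Fin a → Q))
    (D : Module.Dual Q (Fin (a + r) → Q) → (k : ℕ) →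
      (↥(⋀[Q]^(k+1) (Fin (a + r) → Q)) →ₗ[Q] ↥(⋀[Q]^k (Fin (a + r) → Q))))
    (hD : ∀ (ψ : Module.Dual Q (Fin (a + r) → Q)) (k : ℕ)
        (m : Fin (k+1) → (Fin (a + r) → Q)),
      D ψ k (wedge Q (k+1) m) = ∑ i : Fin (k+1),
        ((-1 : Q) ^ (i : ℕ) * ψ (m i)) • wedge Q k (m ∘ i.succAbove)) :
    (iterContr D a (fun i => (LinearMap.proj i).comp φ) r ≠ 0 ↔
      Function.Surjective φ) ∧
    (Function.Injective (iterContr D a (fun i => (LinearMap.proj i).comp φ) r) ↔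
      Function.Surjective φ) := by
  classical
  set ψf : Fin a → Module.Dual Q (Fin (a + r) → Q) :=
    fun i => (LinearMap.proj i).comp φ with hψf
  set T := iterContr D a ψf r with hT
  -- the standard basis, reindexed to `Fin (r + a)`
  let b : Module.Basis (Fin (r + a)) Q (Fin (a + r) → Q) :=
    (Pi.basisFun Q (Fin (a + r))).reindex (finCongr (by omega))
  -- Step 1: if `φ` is not surjective, then `T = 0`.
  have h_not_surj : ¬ Function.Surjective φ → T = 0 := by
    intro hns
    have hrange : LinearMap.range φ < ⊤ :=
      lt_top_iff_ne_top.2 (fun h => hns (LinearMap.range_eq_top.1 h))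
    obtain ⟨ξ, hξ0, hξ⟩ :=
      Submodule.exists_dual_map_eq_bot_of_lt_top hrange inferInstance
    have hvan : ∀ x, ξ (φ x) = 0 := by
      intro x
      have hmem : ξ (φ x) ∈ (LinearMap.range φ).map ξ :=
        Submodule.mem_map_of_mem (LinearMap.mem_range_self _ x)
      rw [hξ] at hmem
      exact (Submodule.mem_bot Q).mp hmem
    have hexp : ∀ y : Fin a → Q, ξ y = ∑ i, y i * ξ (Pi.single i 1) := by
      intro y
      conv_lhs => rw [← Finset.univ_sum_single y]
      rw [map_sum]
      apply Finset.sum_congr rfl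
      intro i _
      rw [show (Pi.single i (y i) : Fin a → Q) = y i • (Pi.single i (1 : Q) : Fin a → Q) by
        rw [← Pi.single_smul, smul_eq_mul, mul_one]]
      rw [map_smul, smul_eq_mul]
    have hdep : ¬ LinearIndependent Q ψf := by
      intro hli
      apply hξ0
      have hc : ∑ i, ξ (Pi.single i 1) • ψf i = 0 := by
        apply LinearMap.ext
        intro x
        have := hexp (φ x)
        rw [hvan x] at this
        simpa [ψf, mul_comm] using this.symm
      have hzero := Fintype.linearIndependent_iff.mp hli (fun i => ξ (Pi.single i 1)) hc
      apply LinearMap.ext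
      intro y
      rw [hexp y]
      simp [hzero]
    have hCL0 : iterCL a ψf = 0 := iterCL_zero_of_dep a ψf hdep
    apply LinearMap.ext
    intro x
    apply Subtype.ext
    rw [hT]
    have := iter_val D hD a ψf r x
    rw [hCL0] at this
    simpa using this
  -- Step 2: if `φ` is surjective, then `T (wedge m) ≠ 0` for an adapted basis `m`.
  have h_surj_ne : Function.Surjective φ → T ≠ 0 := by
    intro hs
    obtain ⟨g, hg⟩ := φ.exists_rightInverse_of_surjective (LinearMap.range_eq_top.2 hs)
    have hφg : ∀ y, φ (g y) = y := fun y => by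
      have := LinearMap.ext_iff.mp hg y
      simpa using this
    have hker : Module.finrank Q (LinearMap.ker φ) = r := by
      have h1 := LinearMap.finrank_range_add_finrank_ker φ
      rw [LinearMap.range_eq_top.2 hs, finrank_top] at h1
      have h2 : Module.finrank Q (Fin a → Q) = a := Module.finrank_fin_fun Q
      have h3 : Module.finrank Q (Fin (a + r) → Q) = a + r := Module.finrank_fin_fun Q
      omega
    let w : Module.Basis (Fin r) Q ↥(LinearMap.ker φ) := Module.finBasisOfFinrankEq Q _ hker
    obtain ⟨π, hπ⟩ := (LinearMap.ker φ).subtype.exists_leftInverse_of_injective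
      (Submodule.ker_subtype _)
    have hπ' : ∀ z : ↥(LinearMap.ker φ), π (z : (Fin (a + r) → Q)) = z := fun z => by
      have := LinearMap.ext_iff.mp hπ z
      simpa using this
    let m : Fin (r + a) → (Fin (a + r) → Q) := fun j =>
      if h : (j : ℕ) < a then g (Pi.single ⟨(j : ℕ), h⟩ 1)
      else ((w ⟨(j : ℕ) - a, by omega⟩ : ↥(LinearMap.ker φ)) : (Fin (a + r) → Q))
    have hadapt : ∀ (i : Fin a) (j : Fin (r + a)),
        ψf i (m j) = if (i : ℕ) = (j : ℕ) then 1 else 0 := by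
      intro i j
      by_cases h : (j : ℕ) < a
      · have : m j = g (Pi.single ⟨(j : ℕ), h⟩ 1) := dif_pos h
        rw [this]
        have : ψf i (g (Pi.single ⟨(j : ℕ), h⟩ 1))
            = (Pi.single (⟨(j : ℕ), h⟩ : Fin a) (1 : Q) : Fin a → Q) i := by
          simp [ψf, hφg]
        rw [this, Pi.single_apply]
        by_cases hij : (i : ℕ) = (j : ℕ)
        · rw [if_pos (Fin.ext (by simpa using hij)), if_pos hij]
        · rw [if_neg (fun hh => hij (by simpa using Fin.ext_iff.mp hh)), if_neg hij]
      · have hm : m j = ((w ⟨(j : ℕ) - a, by omega⟩ : ↥(LinearMap.ker φ)) : (Fin (a + r) → Q)) := dif_neg h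
        have hkerm : φ (m j) = 0 := by
          rw [hm]
          exact LinearMap.mem_ker.mp (w ⟨(j : ℕ) - a, by omega⟩).2
        have : ψf i (m j) = 0 := by simp [ψf, hkerm]
        rw [this, if_neg (by omega)]
    have hval : ((T (wedge Q (r + a) m)) : ExteriorAlgebra Q (Fin (a + r) → Q))
        = ιMulti Q r (fun j => ((w j : ↥(LinearMap.ker φ)) : (Fin (a + r) → Q))) := by
      rw [hT]
      rw [iter_val D hD a ψf r (wedge Q (r + a) m)]
      rw [show ((wedge Q (r + a) m : ⋀[Q]^(r+a) (Fin (a + r) → Q)) : ExteriorAlgebra Q (Fin (a + r) → Q))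
        = ιMulti Q (r + a) m from rfl]
      rw [iterCL_adapted a ψf r m hadapt]
      congr 1
      funext j
      have hnlt : ¬ ((a + (j : ℕ)) < a) := by omega
      show m ⟨a + (j : ℕ), by omega⟩ = _
      rw [show m ⟨a + (j : ℕ), by omega⟩
        = ((w ⟨a + (j : ℕ) - a, by omega⟩ : ↥(LinearMap.ker φ)) : (Fin (a + r) → Q)) from dif_neg hnlt]
      congr 2
      exact Fin.ext (by simp)
    have hnz : ιMulti Q r (fun j => ((w j : ↥(LinearMap.ker φ)) : (Fin (a + r) → Q))) ≠ 0 := by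
      apply ιMulti_ne_zero_of_pairing r _ (w.det.compLinearMap π)
      have harg : (fun j => π ((w j : ↥(LinearMap.ker φ)) : (Fin (a + r) → Q))) = ⇑w :=
        funext fun j => hπ' (w j)
      rw [AlternatingMap.compLinearMap_apply]
      rw [show (fun i => π ((w i : ↥(LinearMap.ker φ)) : (Fin (a + r) → Q))) = ⇑w
        from funext fun j => hπ' (w j)]
      rw [Module.Basis.det_self]
      exact one_ne_zero
    intro h0
    apply hnz
    rw [← hval, h0]
    simp
  -- Step 3: every element of the top exterior power is a multiple of `wedge b`.
  have hdet : ∀ f : Fin (r + a) → (Fin (a + r) → Q),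
      ιMulti Q (r + a) f = b.det f • ιMulti Q (r + a) ⇑b :=
    fun f => ιMulti_eq_det_smul b f
  have hspan : ∀ x : ↥(⋀[Q]^(r + a) (Fin (a + r) → Q)), ∃ c : Q, x = c • wedge Q (r + a) ⇑b := by
    intro x
    have hx : (x : ExteriorAlgebra Q (Fin (a + r) → Q))
        ∈ Submodule.span Q (Set.range (ιMulti Q (r + a))) := by
      rw [ιMulti_span_fixedDegree]
      exact x.2
    have hle : Submodule.span Q (Set.range (ιMulti Q (r + a) (M := (Fin (a + r) → Q))))
        ≤ Submodule.span Q {ιMulti Q (r + a) ⇑b} := by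
      rw [Submodule.span_le]
      rintro _ ⟨f, rfl⟩
      rw [hdet f]
      exact Submodule.smul_mem _ _ (Submodule.mem_span_singleton_self _)
    obtain ⟨c, hc⟩ := Submodule.mem_span_singleton.mp (hle hx)
    refine ⟨c, Subtype.ext ?_⟩
    rw [← hc]
    rfl
  have hbne : wedge Q (r + a) ⇑b ≠ 0 := by
    intro h0
    have h2 : ιMulti Q (r + a) ⇑b = 0 := by
      have h3 := congrArg (Subtype.val) h0
      rw [ZeroMemClass.coe_zero] at h3
      exact h3
    exact ιMulti_ne_zero_of_pairing (r + a) ⇑b b.det (by rw [Module.Basis.det_self]; exact one_ne_zero) h2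
  refine ⟨⟨fun hne => ?_, h_surj_ne⟩, fun hinj => ?_, fun hs => ?_⟩
  · by_contra hns
    exact hne (h_not_surj hns)
  · by_contra hns
    have h0 := h_not_surj hns
    apply hbne
    apply hinj
    rw [h0]
    simp
  · -- surjective → injective
    have hne := h_surj_ne hs
    have hωne : T (wedge Q (r + a) ⇑b) ≠ 0 := by
      intro hω0
      apply hne
      apply LinearMap.ext
      intro x
      obtain ⟨c, rfl⟩ := hspan x
      rw [map_smul, hω0, smul_zero]
      rfl
    intro x y hxy
    obtain ⟨c1, rfl⟩ := hspan x
    obtain ⟨c2, rfl⟩ := hspan y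
    rw [map_smul, map_smul] at hxy
    have : (c1 - c2) • T (wedge Q (r + a) ⇑b) = 0 := by
      refine (sub_smul c1 c2 (T (wedge Q (r + a) ⇑b))).trans ?_
      rw [hxy]
      exact sub_self _
    rcases smul_eq_zero.mp this with h | h
    · rw [sub_eq_zero.mp h]
    · exact absurd h hωne
end

section
/- Let G be a group, H ≤ G a subgroup of index 2, c ∈ G ∖ H, and let R be a commutative ring in which 2 is invertible. Let ψ : H → R^× be a group homomorphism, and define ψ^c : H → R^× by ψ^c(h) = ψ(c h c^{−1}). Let ε : G → R^× be the character with kernel H (ε(g) = 1 for g ∈ H and ε(g) = −1 otherwise). Then there is an isomorphism of R[G]-modules Ind_H^G(ψ) ⊗_R Ind_H^G(ψ^{−1}) ≅ R(triv) ⊕ R(ε) ⊕ Ind_H^G(ψ · (ψ^c)^{−1}), where R(triv) and R(ε) are the rank-one modules on which G acts by the trivial character and by ε respectively. -/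
open TensorProduct

set_option maxHeartbeats 1000000

/-- Let `G` be a group, `H ≤ G` a subgroup of index `2`, `c ∈ G ∖ H`, and let `R` be a
commutative ring in which `2` is invertible.  Let `ψ : H → R^×` be a group homomorphism,
and define `ψ^c : H → R^×` by `ψ^c(h) = ψ(c h c⁻¹)`.  Let `ε : G → R^×` be the character
with kernel `H` (`ε(g) = 1` for `g ∈ H` and `ε(g) = −1` otherwise).  Then there is an
isomorphism of `R[G]`-modules
`Ind_H^G(ψ) ⊗_R Ind_H^G(ψ⁻¹) ≅ R(triv) ⊕ R(ε) ⊕ Ind_H^G(ψ · (ψ^c)⁻¹)`,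
where `R(triv)` and `R(ε)` are the rank-one modules on which `G` acts by the trivial
character and by `ε` respectively.  Here the induced modules are realized as
representations `V`, `V'`, `W`, free of rank `2` over `R` with bases `{v, cv}`,
`{v', cv'}`, `{w, cw}`, on which `H` acts on the distinguished vector through the
characters `ψ`, `ψ⁻¹` and `ψ·(ψ^c)⁻¹` respectively, and the `G`-action on the tensor
product is the diagonal one. -/
theorem stmt16 (R : Type*) [CommRing R] (h2 : IsUnit (2 : R))
    (G : Type*) [Group G] (H : Subgroup G) [hN : H.Normal] (hidx : H.index = 2)
    (c : G) (hc : c ∉ H)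
    (ψ : H →* Rˣ) (ε : G →* Rˣ)
    (hε1 : ∀ g ∈ H, ε g = 1) (hε2 : ∀ g ∉ H, ε g = -1)
    (V V' W : Type*) [AddCommGroup V] [Module R V] [AddCommGroup V'] [Module R V']
    [AddCommGroup W] [Module R W]
    (ρ : Representation R G V) (σ : Representation R G V') (τ : Representation R G W)
    (v : V) (bV : Module.Basis (Fin 2) R V) (hbV0 : bV 0 = v) (hbV1 : bV 1 = ρ c v)
    (hv : ∀ h : H, ρ (h : G) v = ((ψ h : Rˣ) : R) • v)
    (v' : V') (bV' : Module.Basis (Fin 2) R V') (hbV'0 : bV' 0 = v') (hbV'1 : bV' 1 = σ c v')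
    (hv' : ∀ h : H, σ (h : G) v' = (((ψ h)⁻¹ : Rˣ) : R) • v')
    (w : W) (bW : Module.Basis (Fin 2) R W) (hbW0 : bW 0 = w) (hbW1 : bW 1 = τ c w)
    (hw : ∀ h : H, τ (h : G) w =
      ((ψ h * (ψ ⟨c * (h : G) * c⁻¹, hN.conj_mem (h : G) h.2 c⟩)⁻¹ : Rˣ) : R) • w) :
    ∃ e : (V ⊗[R] V') ≃ₗ[R] R × R × W,
      ∀ (g : G) (x : V ⊗[R] V'),
        e ((ρ.tprod σ) g x) = ((e x).1, ((ε g : Rˣ) : R) * (e x).2.1, τ g (e x).2.2) := by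
  classical
  -- membership facts
  have hcc : c * c ∈ H := Subgroup.mul_self_mem_of_index_two hidx c
  have hmem : ∀ {a b : G}, a * b ∈ H ↔ (a ∈ H ↔ b ∈ H) :=
    fun {a b} => Subgroup.mul_mem_iff_of_index_two hidx
  have hcinv : c⁻¹ ∉ H := fun h => hc (by simpa using H.inv_mem h)
  have hgc : ∀ {g : G}, g ∉ H → g * c ∈ H := fun {g} hg => hmem.mpr (by tauto)
  have hcg : ∀ {g : G}, g ∉ H → c⁻¹ * g ∈ H := fun {g} hg => hmem.mpr (by tauto)
  have hconj : ∀ {g : G}, g ∈ H → c⁻¹ * g * c ∈ H := fun {g} hg => by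
    simpa using hN.conj_mem g hg c⁻¹
  have hconj' : ∀ {g : G}, g ∈ H → c * g * c⁻¹ ∈ H := fun {g} hg => hN.conj_mem g hg c
  -- ψ conjugation lemma
  have ψconj : ∀ (k : G) (hk : k ∈ H) (h1 : c * k * c⁻¹ ∈ H) (h2' : c⁻¹ * k * c ∈ H),
      ψ ⟨c * k * c⁻¹, h1⟩ = ψ ⟨c⁻¹ * k * c, h2'⟩ := by
    intro k hk h1 h2'
    have e1 : (⟨c * k * c⁻¹, h1⟩ : H)
        = ⟨c * c, hcc⟩ * ⟨c⁻¹ * k * c, h2'⟩ * (⟨c * c, hcc⟩)⁻¹ := by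
      ext
      simp only [Subgroup.coe_mul, InvMemClass.coe_inv]
      group
    rw [e1, map_mul, map_mul, map_inv]
    rw [mul_comm (ψ ⟨c * c, hcc⟩)]
    simp [mul_assoc]
  -- action formulas
  have mulρ : ∀ (a b : G) (x : V), ρ (a * b) x = ρ a (ρ b x) := by
    intro a b x; rw [map_mul]; rfl
  have mulσ : ∀ (a b : G) (x : V'), σ (a * b) x = σ a (σ b x) := by
    intro a b x; rw [map_mul]; rfl
  have mulτ : ∀ (a b : G) (x : W), τ (a * b) x = τ a (τ b x) := by
    intro a b x; rw [map_mul]; rfl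
  -- for k ∈ H
  have hρ2 : ∀ (k : G) (hk : k ∈ H),
      ρ k (ρ c v) = ((ψ ⟨c⁻¹ * k * c, hconj hk⟩ : Rˣ) : R) • ρ c v := by
    intro k hk
    have h3 : k * c = c * (c⁻¹ * k * c) := by group
    rw [← mulρ, h3, mulρ, hv ⟨c⁻¹ * k * c, hconj hk⟩, map_smul]
  have hσ2 : ∀ (k : G) (hk : k ∈ H),
      σ k (σ c v') = (((ψ ⟨c⁻¹ * k * c, hconj hk⟩)⁻¹ : Rˣ) : R) • σ c v' := by
    intro k hk
    have h3 : k * c = c * (c⁻¹ * k * c) := by group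
    rw [← mulσ, h3, mulσ, hv' ⟨c⁻¹ * k * c, hconj hk⟩, map_smul]
  have hwk : ∀ (k : G) (hk : k ∈ H) (h1 : c * k * c⁻¹ ∈ H),
      τ k w = ((ψ ⟨k, hk⟩ * (ψ ⟨c * k * c⁻¹, h1⟩)⁻¹ : Rˣ) : R) • w := by
    intro k hk h1
    exact hw ⟨k, hk⟩
  have hτ2 : ∀ (k : G) (hk : k ∈ H),
      τ k (τ c w) = ((ψ ⟨c⁻¹ * k * c, hconj hk⟩ * (ψ ⟨k, hk⟩)⁻¹ : Rˣ) : R) • τ c w := by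
    intro k hk
    have h3 : k * c = c * (c⁻¹ * k * c) := by group
    have h4 : (⟨c * (c⁻¹ * k * c) * c⁻¹, hconj' (hconj hk)⟩ : H) = ⟨k, hk⟩ := by
      ext; group
    rw [← mulτ, h3, mulτ, hwk _ (hconj hk) (hconj' (hconj hk)), h4, map_smul]
  -- for g ∉ H
  have hρ3 : ∀ (g : G) (hg : g ∉ H),
      ρ g v = ((ψ ⟨c⁻¹ * g, hcg hg⟩ : Rˣ) : R) • ρ c v := by
    intro g hg
    have h3 : g = c * (c⁻¹ * g) := by group
    conv_lhs => rw [h3, mulρ, hv ⟨c⁻¹ * g, hcg hg⟩]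
    rw [map_smul]
  have hρ4 : ∀ (g : G) (hg : g ∉ H),
      ρ g (ρ c v) = ((ψ ⟨g * c, hgc hg⟩ : Rˣ) : R) • v := by
    intro g hg
    rw [← mulρ]; exact hv ⟨g * c, hgc hg⟩
  have hσ3 : ∀ (g : G) (hg : g ∉ H),
      σ g v' = (((ψ ⟨c⁻¹ * g, hcg hg⟩)⁻¹ : Rˣ) : R) • σ c v' := by
    intro g hg
    have h3 : g = c * (c⁻¹ * g) := by group
    conv_lhs => rw [h3, mulσ, hv' ⟨c⁻¹ * g, hcg hg⟩]
    rw [map_smul]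
  have hσ4 : ∀ (g : G) (hg : g ∉ H),
      σ g (σ c v') = (((ψ ⟨g * c, hgc hg⟩)⁻¹ : Rˣ) : R) • v' := by
    intro g hg
    rw [← mulσ]; exact hv' ⟨g * c, hgc hg⟩
  have hτ3 : ∀ (g : G) (hg : g ∉ H),
      τ g w = ((ψ ⟨c⁻¹ * g, hcg hg⟩ * (ψ ⟨c * (c⁻¹ * g) * c⁻¹, hconj' (hcg hg)⟩)⁻¹ : Rˣ) : R)
        • τ c w := by
    intro g hg
    have h3 : g = c * (c⁻¹ * g) := by group
    conv_lhs => rw [h3, mulτ, hwk _ (hcg hg) (hconj' (hcg hg))]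
    rw [map_smul]
  have hτ4 : ∀ (g : G) (hg : g ∉ H),
      τ g (τ c w) = ((ψ ⟨g * c, hgc hg⟩ * (ψ ⟨c * (g * c) * c⁻¹, hconj' (hgc hg)⟩)⁻¹ : Rˣ) : R)
        • w := by
    intro g hg
    rw [← mulτ]; exact hwk _ (hgc hg) (hconj' (hgc hg))
  -- scalar facts
  have hh2 : (2 : R) * ((h2.unit⁻¹ : Rˣ) : R) = 1 := by
    have h6 := h2.unit.mul_inv
    rwa [h2.unit_spec] at h6
  set u : Rˣ := ψ ⟨c * c, hcc⟩ with hu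
  set hh : R := ((h2.unit⁻¹ : Rˣ) : R) with hhh
  -- splitting identities
  have hsplit1 : ∀ x y : V ⊗[R] V', hh • (x + y) + hh • (x - y) = x := by
    intro x y
    have h5 : x + y + (x - y) = (2 : R) • x := by rw [two_smul]; abel
    rw [← smul_add, h5, smul_smul, mul_comm, hh2, one_smul]
  have hsplit2 : ∀ x y : V ⊗[R] V', hh • (x + y) - hh • (x - y) = y := by
    intro x y
    have h5 : x + y - (x - y) = (2 : R) • y := by rw [two_smul]; abel
    rw [← smul_sub, h5, smul_smul, mul_comm, hh2, one_smul]
  -- the maps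
  set s : V ⊗[R] V' := v ⊗ₜ[R] v' + ρ c v ⊗ₜ[R] σ c v' with hs
  set aa : V ⊗[R] V' := v ⊗ₜ[R] v' - ρ c v ⊗ₜ[R] σ c v' with haa
  set gW : W →ₗ[R] V ⊗[R] V' :=
    bW.constr ℕ ![((u : Rˣ) : R) • (v ⊗ₜ[R] σ c v'), ρ c v ⊗ₜ[R] v'] with hgW
  set f : (R × R × W) →ₗ[R] V ⊗[R] V' :=
    (LinearMap.toSpanSingleton R _ s).coprod
      ((LinearMap.toSpanSingleton R _ aa).coprod gW) with hfdef
  set B : Module.Basis (Fin 2 × Fin 2) R (V ⊗[R] V') := bV.tensorProduct bV' with hBdef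
  set e0 : V ⊗[R] V' →ₗ[R] R × R × W :=
    B.constr ℕ (fun p => ![![(hh, (hh, (0:W))), ((0:R), ((0:R), ((u⁻¹ : Rˣ) : R) • w))],
      ![((0:R), ((0:R), τ c w)), (hh, (-hh, (0:W)))]] p.1 p.2) with he0def
  -- characterizations
  have hgW0 : gW w = ((u : Rˣ) : R) • (v ⊗ₜ[R] σ c v') := by
    rw [hgW, ← hbW0]
    simpa using bW.constr_basis ℕ _ 0
  have hgW1 : gW (τ c w) = ρ c v ⊗ₜ[R] v' := by
    rw [hgW, ← hbW1]
    simpa using bW.constr_basis ℕ _ 1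
  have hf : ∀ (α β : R) (z : W), f (α, β, z) = α • s + (β • aa + gW z) := by
    intro α β z
    rw [hfdef]
    simp [LinearMap.toSpanSingleton_apply]
  have hB : ∀ i j, B (i, j) = bV i ⊗ₜ[R] bV' j := by
    intro i j
    rw [hBdef]
    exact Module.Basis.tensorProduct_apply bV bV' i j
  have he00 : e0 (v ⊗ₜ[R] v') = (hh, hh, (0:W)) := by
    rw [← hbV0, ← hbV'0, ← hB, he0def]
    simpa using B.constr_basis ℕ _ (0, 0)
  have he01 : e0 (v ⊗ₜ[R] σ c v') = ((0:R), (0:R), ((u⁻¹ : Rˣ) : R) • w) := by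
    rw [← hbV0, ← hbV'1, ← hB, he0def]
    simpa using B.constr_basis ℕ _ (0, 1)
  have he10 : e0 (ρ c v ⊗ₜ[R] v') = ((0:R), (0:R), τ c w) := by
    rw [← hbV1, ← hbV'0, ← hB, he0def]
    simpa using B.constr_basis ℕ _ (1, 0)
  have he11 : e0 (ρ c v ⊗ₜ[R] σ c v') = (hh, -hh, (0:W)) := by
    rw [← hbV1, ← hbV'1, ← hB, he0def]
    simpa using B.constr_basis ℕ _ (1, 1)
  have hhh1 : hh + hh = (1 : R) := by rw [← two_mul]; exact hh2
  -- f ∘ e0 = id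
  have key1 : f.comp e0 = LinearMap.id := by
    apply B.ext
    rintro ⟨i, j⟩
    fin_cases i <;> fin_cases j <;>
      simp only [Fin.zero_eta, Fin.mk_one, LinearMap.comp_apply, LinearMap.id_apply, hB,
        hbV0, hbV1, hbV'0, hbV'1]
    · rw [he00, hf, map_zero, add_zero, hs, haa]
      exact hsplit1 _ _
    · rw [he01, hf, zero_smul, zero_smul, zero_add, zero_add, map_smul, hgW0,
        smul_smul, Units.inv_mul, one_smul]
    · rw [he10, hf, zero_smul, zero_smul, zero_add, zero_add, hgW1]
    · rw [he11, hf, map_zero, add_zero, neg_smul, ← sub_eq_add_neg, hs, haa]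
      exact hsplit2 _ _
  -- e0 ∘ f = id
  have key2 : e0.comp f = LinearMap.id := by
    apply LinearMap.prod_ext
    · apply LinearMap.ext_ring
      simp only [LinearMap.comp_apply, LinearMap.inl_apply, LinearMap.id_apply]
      rw [hf]
      simp only [Prod.fst_zero, Prod.snd_zero, zero_smul, one_smul, map_zero, add_zero,
        zero_add]
      rw [hs, map_add, he00, he11]
      simp [Prod.ext_iff, hhh1]
    · apply LinearMap.prod_ext
      · apply LinearMap.ext_ring
        simp only [LinearMap.comp_apply, LinearMap.inr_apply, LinearMap.inl_apply,
          LinearMap.id_apply]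
        rw [hf]
        simp only [Prod.fst_zero, Prod.snd_zero, zero_smul, one_smul, map_zero, add_zero,
          zero_add]
        rw [haa, map_sub, he00, he11]
        simp [Prod.ext_iff, hhh1]
      · apply Module.Basis.ext bW
        intro i
        fin_cases i <;>
          simp only [Fin.zero_eta, Fin.mk_one, LinearMap.comp_apply, LinearMap.inr_apply,
            LinearMap.id_apply, hbW0, hbW1]
        · rw [hf]
          simp only [zero_smul, zero_add, map_zero, add_zero]
          rw [hgW0, map_smul, he01]
          simp [Prod.ext_iff, smul_smul, Units.mul_inv]
        · rw [hf]
          simp only [zero_smul, zero_add, map_zero, add_zero]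
          rw [hgW1, he10]
  -- tensor action on pure tensors
  have Tdef : ∀ (g : G) (x : V) (y : V'),
      (ρ.tprod σ) g (x ⊗ₜ[R] y) = ρ g x ⊗ₜ[R] σ g y := by
    intro g x y
    simp [Representation.tprod_apply]
  -- unit relations
  have hrel1 : ∀ (g : G) (hg : g ∉ H),
      ψ ⟨g * c, hgc hg⟩ = ψ ⟨c * (c⁻¹ * g) * c⁻¹, hconj' (hcg hg)⟩ * u := by
    intro g hg
    rw [hu, ← map_mul]
    exact congrArg ψ (by ext; simp only [Subgroup.coe_mul]; group)
  have hrel2 : ∀ (g : G) (hg : g ∉ H),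
      ψ ⟨c * (g * c) * c⁻¹, hconj' (hgc hg)⟩ = u * ψ ⟨c⁻¹ * g, hcg hg⟩ := by
    intro g hg
    rw [hu, ← map_mul]
    exact congrArg ψ (by ext; simp only [Subgroup.coe_mul]; group)
  -- equivariance: the three pieces
  have feq_s : ∀ g : G, (ρ.tprod σ) g s = s := by
    intro g
    rw [hs, map_add, Tdef, Tdef]
    by_cases hg : g ∈ H
    · rw [hv ⟨g, hg⟩, hv' ⟨g, hg⟩, hρ2 g hg, hσ2 g hg, smul_tmul_smul, smul_tmul_smul]
      simp [Units.mul_inv]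
    · rw [hρ3 g hg, hσ3 g hg, hρ4 g hg, hσ4 g hg, smul_tmul_smul, smul_tmul_smul]
      simp only [Units.mul_inv, one_smul]
      exact add_comm _ _
  have feq_a : ∀ g : G, (ρ.tprod σ) g aa = ((ε g : Rˣ) : R) • aa := by
    intro g
    rw [haa, map_sub, Tdef, Tdef]
    by_cases hg : g ∈ H
    · rw [hv ⟨g, hg⟩, hv' ⟨g, hg⟩, hρ2 g hg, hσ2 g hg, smul_tmul_smul, smul_tmul_smul,
        hε1 g hg]
      simp [Units.mul_inv]
    · rw [hρ3 g hg, hσ3 g hg, hρ4 g hg, hσ4 g hg, smul_tmul_smul, smul_tmul_smul,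
        hε2 g hg]
      simp only [Units.mul_inv, one_smul, Units.val_neg, Units.val_one, neg_smul, one_smul,
        smul_sub]
      abel
  have feq_W : ∀ (g : G) (z : W), (ρ.tprod σ) g (gW z) = gW (τ g z) := by
    intro g
    suffices hmap : (((ρ.tprod σ) g).comp gW : W →ₗ[R] V ⊗[R] V') = gW.comp (τ g) by
      intro z
      exact LinearMap.congr_fun hmap z
    apply Module.Basis.ext bW
    intro i
    fin_cases i <;>
      simp only [Fin.zero_eta, Fin.mk_one, LinearMap.comp_apply, hbW0, hbW1]
    · -- on w
      rw [hgW0, map_smul, Tdef]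
      by_cases hg : g ∈ H
      · rw [hv ⟨g, hg⟩, hσ2 g hg, hwk g hg (hconj' hg), map_smul, hgW0,
          ψconj g hg (hconj' hg) (hconj hg), smul_tmul_smul]
        simp only [smul_smul]
        congr 1
        simp only [Units.val_mul]
        ring
      · rw [hρ3 g hg, hσ4 g hg, hτ3 g hg, map_smul, hgW1, hrel1 g hg, smul_tmul_smul,
          smul_smul]
        congr 1
        have huu : ((u : Rˣ) : R) * ((u⁻¹ : Rˣ) : R) = 1 := Units.mul_inv u
        simp only [mul_inv_rev, Units.val_mul]
        linear_combination (((ψ ⟨c⁻¹ * g, hcg hg⟩ : Rˣ) : R) *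
          (((ψ ⟨c * (c⁻¹ * g) * c⁻¹, hconj' (hcg hg)⟩)⁻¹ : Rˣ) : R)) * huu
    · -- on τ c w
      rw [hgW1, Tdef]
      by_cases hg : g ∈ H
      · rw [hρ2 g hg, hv' ⟨g, hg⟩, hτ2 g hg, map_smul, hgW1, smul_tmul_smul]
        simp only [Units.val_mul]
      · rw [hρ4 g hg, hσ3 g hg, hτ4 g hg, map_smul, hgW0, hrel2 g hg, smul_tmul_smul,
          smul_smul]
        congr 1
        have huu : ((u⁻¹ : Rˣ) : R) * ((u : Rˣ) : R) = 1 := Units.inv_mul u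
        simp only [mul_inv_rev, Units.val_mul]
        linear_combination -(((ψ ⟨g * c, hgc hg⟩ : Rˣ) : R) *
          (((ψ ⟨c⁻¹ * g, hcg hg⟩)⁻¹ : Rˣ) : R)) * huu
  -- full equivariance of f
  have feq : ∀ (g : G) (y : R × R × W),
      f (y.1, ((ε g : Rˣ) : R) * y.2.1, τ g y.2.2) = (ρ.tprod σ) g (f y) := by
    intro g y
    obtain ⟨α, β, z⟩ := y
    rw [hf, hf, map_add, map_add, map_smul, map_smul, feq_s, feq_a, feq_W, smul_smul,
      mul_comm β]
  -- assemble
  refine ⟨LinearEquiv.ofLinear e0 f key2 key1, ?_⟩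
  intro g x
  simp only [LinearEquiv.ofLinear_apply]
  have hfx : f (e0 x) = x := LinearMap.congr_fun key1 x
  have h8 : f ((e0 x).1, ((ε g : Rˣ) : R) * (e0 x).2.1, τ g (e0 x).2.2)
      = (ρ.tprod σ) g x := by
    rw [feq g (e0 x), hfx]
  rw [← h8]
  exact LinearMap.congr_fun key2 _
end
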